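/- Under the hypotheses of the resolvent comparison, if q satisfies q ≥ p log ν_E / log(λ^{1+δ} + 1) for some δ > 0 (equivalently ν_E^{p/q} − 1 ≤ λ^{1+δ}), then the Yosida approximations A^λ_{G,p} := (id − R^λ_{G,p})/λ and A^λ_{G,p,q} := (id − R^λ_{G,p,q})/λ satisfy ‖A^λ_{G,p} x − A^λ_{G,p,q} x‖² ≤ λ^δ κ_{G,p} ‖x‖^p for all x ∈ ℝ^N. -/

import Mathlib

open Finset Real Filter
open scoped RealInnerProductSpace


/-- generalized edge gradient: `f_{e,q}(x) = (Σ_{i<j, i,j∈e} |x_i - x_j|^q)^{1/q}` -/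
noncomputable def feq {N : ℕ} (q : ℝ) (e : Finset (Fin N)) (x : EuclideanSpace ℝ (Fin N)) : ℝ :=
  (∑ p ∈ (e ×ˢ e).filter (fun p => p.1 < p.2), |x p.1 - x p.2| ^ q) ^ (1/q)

/-- `f_e(x) = max_{i,j ∈ e} |x_i - x_j|` -/
noncomputable def femax {N : ℕ} (e : Finset (Fin N)) (x : EuclideanSpace ℝ (Fin N)) : ℝ :=
  ⨆ p ∈ (e ×ˢ e : Finset (Fin N × Fin N)), |x p.1 - x p.2|

/-- `φ_{G,p,q}(x) = (1/p) Σ_{e∈E} w(e) f_{e,q}(x)^p` -/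
noncomputable def phiq {N : ℕ} (E : Finset (Finset (Fin N))) (w : Finset (Fin N) → ℝ)
    (p q : ℝ) (x : EuclideanSpace ℝ (Fin N)) : ℝ :=
  (1/p) * ∑ e ∈ E, w e * feq q e x ^ p

/-- `φ_{G,p}(x) = (1/p) Σ_{e∈E} w(e) f_e(x)^p` -/
noncomputable def phim {N : ℕ} (E : Finset (Finset (Fin N))) (w : Finset (Fin N) → ℝ)
    (p : ℝ) (x : EuclideanSpace ℝ (Fin N)) : ℝ :=
  (1/p) * ∑ e ∈ E, w e * femax e x ^ p

/-- `ν_E = max_{e∈E} #e(#e-1)/2` -/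
def nuE {N : ℕ} (E : Finset (Finset (Fin N))) : ℕ :=
  E.sup fun e => e.card * (e.card - 1) / 2

/-- `i` and `j` are joined by a chain of `k` hyperedges of `E`. -/
def chained {N : ℕ} (E : Finset (Finset (Fin N))) (i j : Fin N) (k : ℕ) : Prop :=
  ∃ μ : ℕ → Fin N, μ 0 = i ∧ μ k = j ∧ ∀ l < k, ∃ e ∈ E, μ l ∈ e ∧ μ (l + 1) ∈ e

/-- hypergraph distance: minimal chain length -/
noncomputable def hdist {N : ℕ} (E : Finset (Finset (Fin N))) (i j : Fin N) : ℕ :=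
  sInf {k | chained E i j k}

/-- hypergraph diameter -/
noncomputable def hdiam {N : ℕ} (E : Finset (Finset (Fin N))) : ℕ :=
  Finset.univ.sup fun i => Finset.univ.sup fun j => hdist E i j

/-- mean-value vector `x̄` -/
noncomputable def meanVec {N : ℕ} (z : EuclideanSpace ℝ (Fin N)) : EuclideanSpace ℝ (Fin N) :=
  WithLp.toLp 2 (fun _ => (∑ i, z i) / N)

lemma diff_abs_rpow {q : ℝ} (hq : 1 < q) : Differentiable ℝ (fun s : ℝ => |s| ^ q) := by
  intro t
  rcases lt_trichotomy t 0 with ht | rfl | ht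
  · have hev : ∀ᶠ s in nhds t, |s| = -s := by
      filter_upwards [eventually_lt_nhds ht] with s hs
      exact abs_of_neg hs
    have hd : DifferentiableAt ℝ (fun s : ℝ => (-s) ^ q) t :=
      (differentiable_neg.differentiableAt).rpow_const (Or.inl (by simpa using ht.ne))
    refine hd.congr_of_eventuallyEq ?_
    filter_upwards [hev] with s hs using by rw [hs]
  · have key : HasDerivAt (fun s : ℝ => |s| ^ q) 0 0 := by
      rw [hasDerivAt_iff_tendsto_slope]
      have htend : Tendsto (fun s : ℝ => |s| ^ (q - 1)) (nhdsWithin 0 {(0:ℝ)}ᶜ) (nhds 0) := by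
        have hc : ContinuousAt (fun s : ℝ => |s| ^ (q - 1)) 0 := by
          have h1 : ContinuousAt (fun x : ℝ => x ^ (q - 1)) (|(0:ℝ)|) := by
            rw [abs_zero]
            exact Real.continuousAt_rpow_const 0 _ (Or.inr (by linarith))
          exact h1.comp continuous_abs.continuousAt
        have h2 := hc.tendsto
        simp only [abs_zero, Real.zero_rpow (by linarith : q - 1 ≠ 0)] at h2
        exact h2.mono_left nhdsWithin_le_nhds
      refine squeeze_zero_norm' ?_ htend
      filter_upwards [self_mem_nhdsWithin] with s hs
      have hs0 : s ≠ 0 := hs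
      rw [slope_def_field]
      have : ‖(|s| ^ q - |(0:ℝ)| ^ q) / (s - 0)‖ = |s| ^ (q - 1) := by
        rw [abs_zero, Real.zero_rpow (by linarith : q ≠ 0), sub_zero, sub_zero,
          Real.norm_eq_abs, abs_div, abs_of_nonneg (Real.rpow_nonneg (abs_nonneg s) q),
          Real.rpow_sub (abs_pos.2 hs0), Real.rpow_one]
      exact le_of_eq this
    exact key.differentiableAt
  · have hev : ∀ᶠ s in nhds t, |s| = s := by
      filter_upwards [eventually_gt_nhds ht] with s hs
      exact abs_of_pos hs
    have hd : DifferentiableAt ℝ (fun s : ℝ => s ^ q) t :=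
      differentiableAt_id.rpow_const (Or.inl ht.ne')
    refine hd.congr_of_eventuallyEq ?_
    filter_upwards [hev] with s hs using by rw [hs]
lemma coord_abs_le_norm {N : ℕ} (x : EuclideanSpace ℝ (Fin N)) (i : Fin N) : |x i| ≤ ‖x‖ := by
  have h := abs_real_inner_le_norm (EuclideanSpace.single i (1:ℝ)) x
  rw [EuclideanSpace.inner_single_left, EuclideanSpace.norm_single] at h
  simpa using h

lemma S_diff {N : ℕ} {q : ℝ} (hq : 1 < q) (K : Finset (Fin N × Fin N)) :
    Differentiable ℝ (fun x : EuclideanSpace ℝ (Fin N) => ∑ k ∈ K, |x k.1 - x k.2| ^ q) := by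
  apply Differentiable.fun_sum
  intro k _
  have hlin : Differentiable ℝ (fun x : EuclideanSpace ℝ (Fin N) => x k.1 - x k.2) :=
    by have := ((EuclideanSpace.proj (𝕜 := ℝ) k.1).differentiable).fun_sub ((EuclideanSpace.proj (𝕜 := ℝ) k.2).differentiable); exact this
  exact (diff_abs_rpow hq).comp hlin
lemma edge_hasFDerivAt_zero {N : ℕ} {p q : ℝ} (hp : 1 < p) (hq : 1 < q)
    (K : Finset (Fin N × Fin N)) {x : EuclideanSpace ℝ (Fin N)}
    (hx : ∀ k ∈ K, x k.1 = x k.2) :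
    HasFDerivAt (fun y : EuclideanSpace ℝ (Fin N) =>
      (∑ k ∈ K, |y k.1 - y k.2| ^ q) ^ ((1/q) * p)) (0 : EuclideanSpace ℝ (Fin N) →L[ℝ] ℝ) x := by
  have hq0 : (0:ℝ) < q := by linarith
  have hp0 : (0:ℝ) < p := by linarith
  have hr0 : (0:ℝ) < (1/q) * p := by positivity
  have hqr : q * ((1/q) * p) = p := by field_simp
  rw [hasFDerivAt_iff_isLittleO_nhds_zero]
  have hfx : (∑ k ∈ K, |x k.1 - x k.2| ^ q) = 0 :=
    Finset.sum_eq_zero fun k hk => by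
      rw [hx k hk, sub_self, abs_zero, Real.zero_rpow hq0.ne']
  set C : ℝ := ((K.card : ℝ) * 2 ^ q) ^ ((1/q) * p) with hC
  have hS0 : ∀ h : EuclideanSpace ℝ (Fin N),
      (0:ℝ) ≤ ∑ k ∈ K, |(x + h) k.1 - (x + h) k.2| ^ q := fun h =>
    Finset.sum_nonneg fun k _ => Real.rpow_nonneg (abs_nonneg _) _
  have hbound : ∀ h : EuclideanSpace ℝ (Fin N),
      (∑ k ∈ K, |(x + h) k.1 - (x + h) k.2| ^ q) ^ ((1/q) * p) ≤ C * ‖h‖ ^ p := by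
    intro h
    have hSle : (∑ k ∈ K, |(x + h) k.1 - (x + h) k.2| ^ q)
        ≤ (K.card : ℝ) * (2 ^ q * ‖h‖ ^ q) := by
      have hterm : ∀ k ∈ K, |(x + h) k.1 - (x + h) k.2| ^ q ≤ 2 ^ q * ‖h‖ ^ q := by
        intro k hk
        have h1 : |(x + h) k.1 - (x + h) k.2| ≤ 2 * ‖h‖ := by
          have e1 : (x + h) k.1 - (x + h) k.2 = h k.1 - h k.2 := by
            simp only [PiLp.add_apply]
            rw [hx k hk]; ring
          rw [e1]
          calc |h k.1 - h k.2| ≤ |h k.1| + |h k.2| := abs_sub _ _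
            _ ≤ ‖h‖ + ‖h‖ := add_le_add (coord_abs_le_norm h _) (coord_abs_le_norm h _)
            _ = 2 * ‖h‖ := by ring
        calc |(x + h) k.1 - (x + h) k.2| ^ q ≤ (2 * ‖h‖) ^ q :=
              Real.rpow_le_rpow (abs_nonneg _) h1 hq0.le
          _ = 2 ^ q * ‖h‖ ^ q := Real.mul_rpow (by norm_num) (norm_nonneg _)
      calc (∑ k ∈ K, |(x + h) k.1 - (x + h) k.2| ^ q)
          ≤ ∑ _k ∈ K, 2 ^ q * ‖h‖ ^ q := Finset.sum_le_sum hterm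
        _ = (K.card : ℝ) * (2 ^ q * ‖h‖ ^ q) := by
            rw [Finset.sum_const, nsmul_eq_mul]
    calc (∑ k ∈ K, |(x + h) k.1 - (x + h) k.2| ^ q) ^ ((1/q) * p)
        ≤ ((K.card : ℝ) * (2 ^ q * ‖h‖ ^ q)) ^ ((1/q) * p) :=
          Real.rpow_le_rpow (hS0 h) hSle hr0.le
      _ = C * ‖h‖ ^ p := by
          rw [← mul_assoc, Real.mul_rpow (by positivity) (by positivity),
            ← Real.rpow_mul (norm_nonneg h), hqr]
  have heq : (fun h : EuclideanSpace ℝ (Fin N) =>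
      (∑ k ∈ K, |(x + h) k.1 - (x + h) k.2| ^ q) ^ ((1/q) * p)
        - (∑ k ∈ K, |x k.1 - x k.2| ^ q) ^ ((1/q) * p)
        - (0 : EuclideanSpace ℝ (Fin N) →L[ℝ] ℝ) h)
      = fun h : EuclideanSpace ℝ (Fin N) =>
        (∑ k ∈ K, |(x + h) k.1 - (x + h) k.2| ^ q) ^ ((1/q) * p) := by
    funext h
    rw [hfx, Real.zero_rpow hr0.ne']
    simp
  rw [heq]
  have hBigO : (fun h : EuclideanSpace ℝ (Fin N) =>
      (∑ k ∈ K, |(x + h) k.1 - (x + h) k.2| ^ q) ^ ((1/q) * p))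
      =O[nhds 0] (fun h : EuclideanSpace ℝ (Fin N) => ‖h‖ ^ p) := by
    refine Asymptotics.IsBigO.of_bound C (Filter.Eventually.of_forall fun h => ?_)
    rw [Real.norm_eq_abs, abs_of_nonneg (Real.rpow_nonneg (hS0 h) _), Real.norm_eq_abs,
      abs_of_nonneg (Real.rpow_nonneg (norm_nonneg h) _)]
    exact hbound h
  have hlittle : (fun h : EuclideanSpace ℝ (Fin N) => ‖h‖ ^ p)
      =o[nhds 0] (fun h : EuclideanSpace ℝ (Fin N) => h) := by
    have e2 : (fun h : EuclideanSpace ℝ (Fin N) => ‖h‖ ^ p)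
        = fun h => ‖h‖ ^ (p - 1) * ‖h‖ := by
      funext h
      by_cases h0 : h = 0
      · simp [h0, Real.zero_rpow hp0.ne']
      · have h3 := Real.rpow_add (norm_pos_iff.mpr h0) (p - 1) 1
        rw [sub_add_cancel, Real.rpow_one] at h3
        exact h3
    rw [e2]
    have h1 : (fun h : EuclideanSpace ℝ (Fin N) => ‖h‖ ^ (p - 1))
        =o[nhds 0] (fun _ : EuclideanSpace ℝ (Fin N) => (1:ℝ)) := by
      rw [Asymptotics.isLittleO_one_iff]
      have hc : ContinuousAt (fun t : ℝ => t ^ (p - 1)) 0 :=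
        Real.continuousAt_rpow_const 0 _ (Or.inr (by linarith))
      have := hc.tendsto.comp (tendsto_norm_zero :
        Tendsto (fun h : EuclideanSpace ℝ (Fin N) => ‖h‖) (nhds 0) (nhds 0))
      simpa [Real.zero_rpow (by linarith : p - 1 ≠ 0), Function.comp_def] using this
    have h2 := h1.mul_isBigO (Asymptotics.isBigO_refl (fun h : EuclideanSpace ℝ (Fin N) => ‖h‖) (nhds 0))
    simp only [one_mul] at h2
    exact h2.trans_isBigO (Asymptotics.isBigO_norm_left.mpr (Asymptotics.isBigO_refl _ _))
  exact hBigO.trans_isLittleO hlittle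
lemma convex_gradient_ineq {N : ℕ} {f : EuclideanSpace ℝ (Fin N) → ℝ}
    (hf : ConvexOn ℝ Set.univ f) {y : EuclideanSpace ℝ (Fin N)}
    (hd : DifferentiableAt ℝ f y) (z : EuclideanSpace ℝ (Fin N)) :
    ⟪gradient f y, z - y⟫ ≤ f z - f y := by
  set c : ℝ → EuclideanSpace ℝ (Fin N) := fun t => y + t • (z - y) with hc
  have hc0 : c 0 = y := by simp [hc]
  have hc1 : c 1 = z := by simp [hc]
  have hgconv : ConvexOn ℝ Set.univ (f ∘ c) := by
    have haff := hf.comp_affineMap (AffineMap.lineMap y z)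
    have : (f ∘ (AffineMap.lineMap y z) : ℝ → ℝ) = f ∘ c := by
      funext t
      simp only [hc, Function.comp_apply, AffineMap.lineMap_apply_module]
      congr 1
      module
    rw [this] at haff
    simpa using haff
  have hder : HasDerivAt (f ∘ c) (⟪gradient f y, z - y⟫) 0 := by
    have hline : HasDerivAt c (z - y) 0 := by
      have := ((hasDerivAt_id (0:ℝ)).smul_const (z - y)).const_add y
      simpa [hc] using this
    have hfd : HasFDerivAt f (InnerProductSpace.toDual ℝ _ (gradient f y)) (c 0) := by
      rw [hc0]
      exact hasGradientAt_iff_hasFDerivAt.mp hd.hasGradientAt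
    have := hfd.comp_hasDerivAt 0 hline
    simpa [InnerProductSpace.toDual_apply_apply] using this
  have hslope := hgconv.le_slope_of_hasDerivAt (Set.mem_univ 0) (Set.mem_univ 1) one_pos hder
  rw [slope_def_field] at hslope
  simpa [hc0, hc1] using hslope
lemma convexOn_rpow_comp {N : ℕ} {f : EuclideanSpace ℝ (Fin N) → ℝ} {p : ℝ}
    (hf : ConvexOn ℝ Set.univ f) (h0 : ∀ x, 0 ≤ f x) (hp : 1 ≤ p) :
    ConvexOn ℝ Set.univ (fun x => f x ^ p) := by
  refine ⟨convex_univ, fun x _ y _ a b ha hb hab => ?_⟩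
  simp only [smul_eq_mul]
  have h1 : f (a • x + b • y) ≤ a * f x + b * f y := by
    have := hf.2 (Set.mem_univ x) (Set.mem_univ y) ha hb hab
    simpa [smul_eq_mul] using this
  have h2 : (a * f x + b * f y) ^ p ≤ a * f x ^ p + b * f y ^ p := by
    have := (convexOn_rpow hp).2 (Set.mem_Ici.mpr (h0 x)) (Set.mem_Ici.mpr (h0 y)) ha hb hab
    simpa [smul_eq_mul] using this
  calc f (a • x + b • y) ^ p ≤ (a * f x + b * f y) ^ p :=
        Real.rpow_le_rpow (h0 _) h1 (by linarith)
    _ ≤ a * f x ^ p + b * f y ^ p := h2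

lemma feq_nonneg {N : ℕ} (q : ℝ) (e : Finset (Fin N)) (x : EuclideanSpace ℝ (Fin N)) :
    0 ≤ feq q e x :=
  Real.rpow_nonneg (Finset.sum_nonneg fun k _ => Real.rpow_nonneg (abs_nonneg _) _) _

lemma feq_convexOn {N : ℕ} {q : ℝ} (hq : 1 ≤ q) (e : Finset (Fin N)) :
    ConvexOn ℝ Set.univ (fun x : EuclideanSpace ℝ (Fin N) => feq q e x) := by
  haveI : Fact (1 ≤ ENNReal.ofReal q) := ⟨ENNReal.one_le_ofReal.mpr hq⟩
  have hq0 : (0:ℝ) < q := by linarith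
  have htr : (ENNReal.ofReal q).toReal = q := ENNReal.toReal_ofReal hq0.le
  set K : Finset (Fin N × Fin N) := (e ×ˢ e).filter (fun r => r.1 < r.2) with hK
  let L : EuclideanSpace ℝ (Fin N) →ₗ[ℝ] PiLp (ENNReal.ofReal q) (fun _ : K => ℝ) :=
    { toFun := fun x => (WithLp.equiv (ENNReal.ofReal q) (∀ _ : K, ℝ)).symm
        (fun k => x k.1.1 - x k.1.2)
      map_add' := by
        intro a b
        apply (WithLp.equiv (ENNReal.ofReal q) (∀ _ : K, ℝ)).injective
        funext k
        simp [PiLp.add_apply]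
        ring
      map_smul' := by
        intro c a
        apply (WithLp.equiv (ENNReal.ofReal q) (∀ _ : K, ℝ)).injective
        funext k
        simp [PiLp.smul_apply, smul_eq_mul]
        ring }
  have hnorm : ∀ x : EuclideanSpace ℝ (Fin N), feq q e x = ‖L x‖ := by
    intro x
    rw [PiLp.norm_eq_sum (by rw [htr]; exact hq0), htr]
    simp only [feq, Real.norm_eq_abs, L, LinearMap.coe_mk, AddHom.coe_mk,
      WithLp.equiv_symm_apply, PiLp.toLp_apply]
    congr 1
    exact (Finset.sum_coe_sort K (fun k => |x k.1 - x k.2| ^ q)).symm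
  have hconv : ConvexOn ℝ Set.univ (fun x : EuclideanSpace ℝ (Fin N) => ‖L x‖) := by
    have := convexOn_univ_norm.comp_affineMap L.toAffineMap
    exact this
  have : (fun x : EuclideanSpace ℝ (Fin N) => feq q e x)
      = fun x => ‖L x‖ := funext hnorm
  rw [this]
  exact hconv
lemma sum_convexOn {N : ℕ} {A : Type*} (s : Finset A) (g : A → EuclideanSpace ℝ (Fin N) → ℝ)
    (h : ∀ i ∈ s, ConvexOn ℝ Set.univ (g i)) :
    ConvexOn ℝ Set.univ (fun x => ∑ i ∈ s, g i x) := by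
  classical
  induction s using Finset.induction_on with
  | empty => simpa using convexOn_const (0:ℝ) convex_univ
  | @insert a s ha ih =>
    simp only [Finset.sum_insert ha]
    exact (h a (Finset.mem_insert_self a s)).add (ih fun i hi => h i (Finset.mem_insert_of_mem hi))

lemma phiq_convexOn {N : ℕ} (E : Finset (Finset (Fin N))) (w : Finset (Fin N) → ℝ)
    {p q : ℝ} (hp : 1 < p) (hq : 1 < q) (hw : ∀ e ∈ E, 0 ≤ w e) :
    ConvexOn ℝ Set.univ (phiq E w p q) := by
  have h1 : ConvexOn ℝ Set.univ (fun x : EuclideanSpace ℝ (Fin N) =>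
      ∑ e ∈ E, w e * feq q e x ^ p) := by
    refine sum_convexOn E _ (fun e he => ?_)
    have := (convexOn_rpow_comp (feq_convexOn hq.le e) (feq_nonneg q e) hp.le).smul (hw e he)
    simpa [smul_eq_mul] using this
  have h2 := h1.smul (le_of_lt (by positivity : (0:ℝ) < 1/p))
  simp only [smul_eq_mul] at h2
  have he : phiq E w p q = fun x => (1/p) * ∑ e ∈ E, w e * feq q e x ^ p := rfl
  rw [he]
  exact h2

lemma phiq_diff {N : ℕ} (E : Finset (Finset (Fin N))) (w : Finset (Fin N) → ℝ)
    {p q : ℝ} (hp : 1 < p) (hq : 1 < q) :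
    Differentiable ℝ (phiq E w p q) := by
  have hedge : ∀ e : Finset (Fin N),
      Differentiable ℝ (fun x : EuclideanSpace ℝ (Fin N) => feq q e x ^ p) := by
    intro e
    set K : Finset (Fin N × Fin N) := (e ×ˢ e).filter (fun r => r.1 < r.2) with hK
    have heq : (fun x : EuclideanSpace ℝ (Fin N) => feq q e x ^ p)
        = fun x => (∑ k ∈ K, |x k.1 - x k.2| ^ q) ^ ((1/q) * p) := by
      funext x
      exact (Real.rpow_mul (Finset.sum_nonneg fun k _ => Real.rpow_nonneg (abs_nonneg _) _)
        (1/q) p).symm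
    rw [heq]
    intro x
    by_cases hx : (∑ k ∈ K, |x k.1 - x k.2| ^ q) = 0
    · have hz : ∀ k ∈ K, x k.1 = x k.2 := by
        intro k hk
        have hall := (Finset.sum_eq_zero_iff_of_nonneg
          (fun k _ => Real.rpow_nonneg (abs_nonneg _) _)).mp hx k hk
        have habs : |x k.1 - x k.2| = 0 :=
          (Real.rpow_eq_zero (abs_nonneg _) (by linarith : q ≠ 0)).mp hall
        have := abs_eq_zero.mp habs
        linarith [sub_eq_zero.mp this]
      exact (edge_hasFDerivAt_zero hp hq K hz).differentiableAt
    · exact ((S_diff hq K) x).rpow_const (Or.inl hx)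
  have : Differentiable ℝ (fun x : EuclideanSpace ℝ (Fin N) =>
      ∑ e ∈ E, w e * feq q e x ^ p) :=
    Differentiable.fun_sum fun e _ => (hedge e).const_mul (w e)
  exact this.const_mul (1/p)

lemma femax_nonneg {N : ℕ} (e : Finset (Fin N)) (x : EuclideanSpace ℝ (Fin N)) :
    0 ≤ femax e x :=
  Real.iSup_nonneg fun _ => Real.iSup_nonneg fun _ => abs_nonneg _

lemma femax_le {N : ℕ} {e : Finset (Fin N)} {x : EuclideanSpace ℝ (Fin N)} {c : ℝ}
    (hc : 0 ≤ c) (h : ∀ k ∈ e ×ˢ e, |x k.1 - x k.2| ≤ c) : femax e x ≤ c := by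
  refine Real.iSup_le (fun k => Real.iSup_le (fun hk => h k hk) hc) hc

lemma le_femax {N : ℕ} {e : Finset (Fin N)} {x : EuclideanSpace ℝ (Fin N)}
    {k : Fin N × Fin N} (hk : k ∈ e ×ˢ e) : |x k.1 - x k.2| ≤ femax e x := by
  have h2 := le_ciSup (f := fun k : Fin N × Fin N => ⨆ (_ : k ∈ e ×ˢ e), |x k.1 - x k.2|)
    (Set.Finite.bddAbove (Set.finite_range _)) k
  rw [ciSup_pos hk] at h2
  exact h2

lemma femax_zero {N : ℕ} (e : Finset (Fin N)) : femax e (0 : EuclideanSpace ℝ (Fin N)) = 0 := by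
  refine le_antisymm (femax_le le_rfl fun k _ => ?_) (femax_nonneg e 0)
  simp

lemma pair_le_feq {N : ℕ} {q : ℝ} (hq : 1 ≤ q) {e : Finset (Fin N)}
    {x : EuclideanSpace ℝ (Fin N)} {k : Fin N × Fin N}
    (hk : k ∈ (e ×ˢ e).filter (fun r => r.1 < r.2)) : |x k.1 - x k.2| ≤ feq q e x := by
  have hq0 : (0:ℝ) < q := by linarith
  have h1 : |x k.1 - x k.2| = (|x k.1 - x k.2| ^ q) ^ (1/q) := by
    rw [← Real.rpow_mul (abs_nonneg _), mul_one_div_cancel hq0.ne', Real.rpow_one]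
  rw [h1]
  exact Real.rpow_le_rpow (Real.rpow_nonneg (abs_nonneg _) _)
    (Finset.single_le_sum (f := fun r : Fin N × Fin N => |x r.1 - x r.2| ^ q)
      (fun k _ => Real.rpow_nonneg (abs_nonneg _) _) hk) (by positivity)

lemma femax_le_feq {N : ℕ} {q : ℝ} (hq : 1 ≤ q) (e : Finset (Fin N))
    (x : EuclideanSpace ℝ (Fin N)) : femax e x ≤ feq q e x := by
  refine femax_le (feq_nonneg q e x) fun k hk => ?_
  rcases lt_trichotomy k.1 k.2 with h | h | h
  · exact pair_le_feq hq (Finset.mem_filter.mpr ⟨hk, h⟩)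
  · rw [h, sub_self, abs_zero]; exact feq_nonneg q e x
  · rw [abs_sub_comm]
    have hk' : (k.2, k.1) ∈ (e ×ˢ e).filter (fun r => r.1 < r.2) := by
      rw [Finset.mem_product] at hk
      exact Finset.mem_filter.mpr ⟨Finset.mem_product.mpr ⟨hk.2, hk.1⟩, h⟩
    exact pair_le_feq hq hk'

lemma feq_le_card_femax {N : ℕ} {q : ℝ} (hq : 1 ≤ q) (e : Finset (Fin N))
    (x : EuclideanSpace ℝ (Fin N)) :
    feq q e x ≤ ((((e ×ˢ e).filter (fun r => r.1 < r.2)).card : ℝ)) ^ (1/q) * femax e x := by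
  have hq0 : (0:ℝ) < q := by linarith
  set K : Finset (Fin N × Fin N) := (e ×ˢ e).filter (fun r => r.1 < r.2) with hK
  have hsum : (∑ k ∈ K, |x k.1 - x k.2| ^ q) ≤ (K.card : ℝ) * femax e x ^ q := by
    calc (∑ k ∈ K, |x k.1 - x k.2| ^ q) ≤ ∑ _k ∈ K, femax e x ^ q :=
          Finset.sum_le_sum fun k hk => Real.rpow_le_rpow (abs_nonneg _)
            (le_femax (Finset.mem_filter.mp hk).1) hq0.le
      _ = (K.card : ℝ) * femax e x ^ q := by rw [Finset.sum_const, nsmul_eq_mul]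
  calc feq q e x ≤ ((K.card : ℝ) * femax e x ^ q) ^ (1/q) :=
        Real.rpow_le_rpow (Finset.sum_nonneg fun k _ => Real.rpow_nonneg (abs_nonneg _) _)
          hsum (by positivity)
    _ = (K.card : ℝ) ^ (1/q) * femax e x := by
        rw [Real.mul_rpow (Nat.cast_nonneg _) (Real.rpow_nonneg (femax_nonneg e x) _),
          ← Real.rpow_mul (femax_nonneg e x), mul_one_div_cancel hq0.ne', Real.rpow_one]

lemma cardK_le_nuE {N : ℕ} {E : Finset (Finset (Fin N))} {e : Finset (Fin N)} (he : e ∈ E) :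
    ((e ×ˢ e).filter (fun r => r.1 < r.2)).card ≤ nuE E := by
  set K : Finset (Fin N × Fin N) := (e ×ˢ e).filter (fun r => r.1 < r.2) with hK
  set K' : Finset (Fin N × Fin N) := (e ×ˢ e).filter (fun r => r.2 < r.1) with hK'
  have hdisj : Disjoint K K' := by
    rw [Finset.disjoint_left]
    intro k hk hk'
    exact absurd (Finset.mem_filter.mp hk').2 (lt_asymm (Finset.mem_filter.mp hk).2)
  have hcard : K'.card = K.card := by
    refine Finset.card_bij' (fun k _ => k.swap) (fun k _ => k.swap) ?_ ?_ ?_ ?_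
    · intro k hk
      obtain ⟨hkp, hkl⟩ := Finset.mem_filter.mp hk
      rw [Finset.mem_product] at hkp
      exact Finset.mem_filter.mpr ⟨Finset.mem_product.mpr ⟨hkp.2, hkp.1⟩, hkl⟩
    · intro k hk
      obtain ⟨hkp, hkl⟩ := Finset.mem_filter.mp hk
      rw [Finset.mem_product] at hkp
      exact Finset.mem_filter.mpr ⟨Finset.mem_product.mpr ⟨hkp.2, hkp.1⟩, hkl⟩
    · intro k _; exact Prod.swap_swap k
    · intro k _; exact Prod.swap_swap k
  have hsub : K ∪ K' ⊆ e.offDiag := by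
    intro k hk
    rcases Finset.mem_union.mp hk with h | h
    · obtain ⟨hkp, hkl⟩ := Finset.mem_filter.mp h
      rw [Finset.mem_product] at hkp
      exact Finset.mem_offDiag.mpr ⟨hkp.1, hkp.2, ne_of_lt hkl⟩
    · obtain ⟨hkp, hkl⟩ := Finset.mem_filter.mp h
      rw [Finset.mem_product] at hkp
      exact Finset.mem_offDiag.mpr ⟨hkp.1, hkp.2, ne_of_gt hkl⟩
  have h2 : 2 * K.card ≤ e.card * e.card - e.card := by
    have := Finset.card_le_card hsub
    rw [Finset.card_union_of_disjoint hdisj, hcard, Finset.offDiag_card] at this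
    omega
  have h3 : K.card ≤ e.card * (e.card - 1) / 2 := by
    rw [Nat.le_div_iff_mul_le (by norm_num : 0 < 2)]
    have : e.card * (e.card - 1) = e.card * e.card - e.card := by
      cases e.card with
      | zero => simp
      | succ n => rw [Nat.succ_sub_one, Nat.mul_succ, Nat.add_sub_cancel]
    omega
  refine le_trans h3 ?_
  simp only [nuE]
  exact Finset.le_sup (f := fun e : Finset (Fin N) => e.card * (e.card - 1) / 2) he
lemma phim_nonneg {N : ℕ} (E : Finset (Finset (Fin N))) (w : Finset (Fin N) → ℝ)
    {p : ℝ} (hp : 0 < p) (hw : ∀ e ∈ E, 0 ≤ w e) (z : EuclideanSpace ℝ (Fin N)) :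
    0 ≤ phim E w p z := by
  have : (0:ℝ) ≤ ∑ e ∈ E, w e * femax e z ^ p :=
    Finset.sum_nonneg fun e he => mul_nonneg (hw e he)
      (Real.rpow_nonneg (femax_nonneg e z) _)
  have h1 : (0:ℝ) ≤ 1/p := by positivity
  exact mul_nonneg h1 this

lemma phim_zero {N : ℕ} (E : Finset (Finset (Fin N))) (w : Finset (Fin N) → ℝ)
    {p : ℝ} (hp : 0 < p) : phim E w p 0 = 0 := by
  have : ∀ e ∈ E, w e * femax e (0 : EuclideanSpace ℝ (Fin N)) ^ p = 0 := by
    intro e _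
    rw [femax_zero, Real.zero_rpow hp.ne', mul_zero]
  simp only [phim, Finset.sum_congr rfl this, Finset.sum_const_zero, mul_zero]

lemma phim_le_phiq {N : ℕ} (E : Finset (Finset (Fin N))) (w : Finset (Fin N) → ℝ)
    {p q : ℝ} (hp : 0 < p) (hq : 1 ≤ q) (hw : ∀ e ∈ E, 0 ≤ w e)
    (z : EuclideanSpace ℝ (Fin N)) : phim E w p z ≤ phiq E w p q z := by
  have h1 : (0:ℝ) ≤ 1/p := by positivity
  refine mul_le_mul_of_nonneg_left (Finset.sum_le_sum fun e he => ?_) h1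
  exact mul_le_mul_of_nonneg_left
    (Real.rpow_le_rpow (femax_nonneg e z) (femax_le_feq hq e z) hp.le) (hw e he)

lemma phiq_le_c_phim {N : ℕ} (E : Finset (Finset (Fin N))) (w : Finset (Fin N) → ℝ)
    {p q : ℝ} (hp : 0 < p) (hq : 1 ≤ q) (hw : ∀ e ∈ E, 0 ≤ w e)
    (z : EuclideanSpace ℝ (Fin N)) :
    phiq E w p q z ≤ (nuE E : ℝ) ^ (p/q) * phim E w p z := by
  have hq0 : (0:ℝ) < q := by linarith
  have hterm : ∀ e ∈ E, w e * feq q e z ^ p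
      ≤ (nuE E : ℝ) ^ (p/q) * (w e * femax e z ^ p) := by
    intro e he
    have h1 : feq q e z ≤ (nuE E : ℝ) ^ (1/q) * femax e z := by
      refine le_trans (feq_le_card_femax hq e z) ?_
      refine mul_le_mul_of_nonneg_right ?_ (femax_nonneg e z)
      exact Real.rpow_le_rpow (Nat.cast_nonneg _)
        (Nat.cast_le.mpr (cardK_le_nuE he)) (by positivity)
    have h2 : feq q e z ^ p ≤ (nuE E : ℝ) ^ (p/q) * femax e z ^ p := by
      calc feq q e z ^ p ≤ ((nuE E : ℝ) ^ (1/q) * femax e z) ^ p :=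
            Real.rpow_le_rpow (feq_nonneg q e z) h1 hp.le
        _ = (nuE E : ℝ) ^ (p/q) * femax e z ^ p := by
            rw [Real.mul_rpow (Real.rpow_nonneg (Nat.cast_nonneg _) _) (femax_nonneg e z),
              ← Real.rpow_mul (Nat.cast_nonneg _)]
            congr 2
            ring
    calc w e * feq q e z ^ p ≤ w e * ((nuE E : ℝ) ^ (p/q) * femax e z ^ p) :=
          mul_le_mul_of_nonneg_left h2 (hw e he)
      _ = (nuE E : ℝ) ^ (p/q) * (w e * femax e z ^ p) := by ring
  have h3 : (0:ℝ) ≤ 1/p := by positivity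
  calc phiq E w p q z ≤ (1/p) * ∑ e ∈ E, (nuE E : ℝ) ^ (p/q) * (w e * femax e z ^ p) :=
        mul_le_mul_of_nonneg_left (Finset.sum_le_sum hterm) h3
    _ = (nuE E : ℝ) ^ (p/q) * phim E w p z := by
        rw [← Finset.mul_sum]
        simp only [phim]
        ring
set_option maxHeartbeats 1000000 in
theorem stmt15 (N : ℕ) (E : Finset (Finset (Fin N))) (hE : ∀ e ∈ E, 2 ≤ e.card)
    (w : Finset (Fin N) → ℝ) (hw : ∀ e ∈ E, 0 < w e)
    (p q : ℝ) (hp : 1 < p) (hq : 1 < q) (lam : ℝ) (hlam : 0 < lam) (δ : ℝ) (hδ : 0 < δ)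
    (hqcond : p * Real.log (nuE E) / Real.log (lam ^ (1 + δ) + 1) ≤ q)
    (κ : ℝ) (hκ : ∀ z : EuclideanSpace ℝ (Fin N), phim E w p z ≤ κ * ‖z‖ ^ p)
    (R Rq : EuclideanSpace ℝ (Fin N) → EuclideanSpace ℝ (Fin N))
    (hR : ∀ x, ∃ η : EuclideanSpace ℝ (Fin N),
      (∀ z, ⟪η, z - R x⟫ ≤ phim E w p z - phim E w p (R x)) ∧ R x + lam • η = x)
    (hRq : ∀ x, Rq x + lam • gradient (phiq E w p q) (Rq x) = x)
    (x : EuclideanSpace ℝ (Fin N)) :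
    ‖lam⁻¹ • (x - R x) - lam⁻¹ • (x - Rq x)‖ ^ 2 ≤ lam ^ δ * κ * ‖x‖ ^ p := by
  classical
  have hp0 : (0:ℝ) < p := by linarith
  obtain ⟨η, hη, hsum⟩ := hR x
  have hgz := hRq x
  set y := R x with hy
  set z := Rq x with hz
  set g := gradient (phiq E w p q) z with hg
  have hw' : ∀ e ∈ E, 0 ≤ w e := fun e he => (hw e he).le
  have hphim_nonneg : ∀ v, 0 ≤ phim E w p v := phim_nonneg E w hp0 hw'
  have hphim0 : phim E w p 0 = 0 := phim_zero E w hp0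
  have hkx : 0 ≤ κ * ‖x‖ ^ p := le_trans (hphim_nonneg x) (hκ x)
  have hxy : x - y = lam • η := by rw [← hsum]; abel
  have hxz : x - z = lam • g := by rw [← hgz]; abel
  have hvec : lam⁻¹ • (x - y) - lam⁻¹ • (x - z) = lam⁻¹ • (z - y) := by
    rw [← smul_sub]; congr 1; abel
  rw [hvec]
  have hzy : z - y = lam • (η - g) := by
    have h0 : z - y = (x - y) - (x - z) := by abel
    rw [h0, hxy, hxz, ← smul_sub]
  have hnorm2 : ‖lam⁻¹ • (z - y)‖^2 = (lam⁻¹)^2 * ‖z - y‖^2 := by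
    rw [norm_smul, Real.norm_eq_abs, abs_of_pos (inv_pos.mpr hlam), mul_pow]
  rw [hnorm2]
  by_cases hEe : E = ∅
  · -- trivial case: empty hypergraph
    have hphiq0 : phiq E w p q = fun _ => (0:ℝ) := by
      funext v; simp [phiq, hEe]
    have hgrad0 : g = 0 := by
      rw [hg, hphiq0]
      exact gradient_const _ _
    have hzx : z = x := by
      have h0 := hgz
      rw [hgrad0, smul_zero, add_zero] at h0
      exact h0
    have hphim0' : ∀ v, phim E w p v = 0 := by
      intro v; simp [phim, hEe]
    have hη0 : η = 0 := by
      have h1 := hη (y + η)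
      rw [hphim0' (y + η), hphim0' y] at h1
      have h2 : y + η - y = η := by abel
      rw [h2] at h1
      exact real_inner_self_nonpos.mp (by linarith)
    have hyx : y = x := by
      rw [hη0, smul_zero, add_zero] at hsum
      exact hsum
    rw [hzx, hyx, sub_self, norm_zero]
    have : (0:ℝ) ≤ lam ^ δ * κ * ‖x‖ ^ p := by
      rw [mul_assoc]
      exact mul_nonneg (Real.rpow_nonneg hlam.le δ) hkx
    simpa using this
  · -- main case
    obtain ⟨e0, he0⟩ := Finset.nonempty_iff_ne_empty.mpr hEe
    have hpos : 0 < e0.card := by have := hE e0 he0; omega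
    obtain ⟨i0, hi0⟩ := Finset.card_pos.mp hpos
    have hκ0 : 0 ≤ κ := by
      have h1 := hκ (EuclideanSpace.single i0 (1:ℝ))
      rw [EuclideanSpace.norm_single] at h1
      simp only [norm_one, Real.one_rpow, mul_one] at h1
      exact le_trans (hphim_nonneg _) h1
    have hν1 : 1 ≤ (nuE E : ℝ) := by
      have hc2 := hE e0 he0
      have h1 : 1 ≤ e0.card * (e0.card - 1) / 2 := by
        rw [Nat.le_div_iff_mul_le (by norm_num : 0 < 2)]
        have : 2 * 1 ≤ e0.card * (e0.card - 1) := Nat.mul_le_mul hc2 (by omega)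
        omega
      have h2 : 1 ≤ nuE E := le_trans h1
        (Finset.le_sup (f := fun e : Finset (Fin N) => e.card * (e.card - 1) / 2) he0)
      exact_mod_cast h2
    set c : ℝ := (nuE E : ℝ) ^ (p / q) with hc
    have hc1 : 1 ≤ c := by
      rw [hc, ← Real.one_rpow (p/q)]
      exact Real.rpow_le_rpow zero_le_one hν1 (by positivity)
    have hclam : c ≤ lam ^ (1+δ) + 1 := by
      have hlpos : 0 < lam ^ (1+δ) := Real.rpow_pos_of_pos hlam (1+δ)
      have hL : 0 < Real.log (lam ^ (1+δ) + 1) := Real.log_pos (by linarith)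
      have hq0 : (0:ℝ) < q := by linarith
      rw [div_le_iff₀ hL] at hqcond
      have h2 : (p/q) * Real.log (nuE E) ≤ Real.log (lam ^ (1+δ) + 1) := by
        rw [div_mul_eq_mul_div, div_le_iff₀ hq0]
        linarith [hqcond]
      have hν0 : (0:ℝ) < (nuE E : ℝ) := by linarith
      calc c = Real.exp (Real.log (nuE E) * (p/q)) := by
            rw [hc, Real.rpow_def_of_pos hν0]
        _ ≤ Real.exp (Real.log (lam ^ (1+δ) + 1)) := by
            apply Real.exp_le_exp.mpr
            linarith [h2]
        _ = lam ^ (1+δ) + 1 := Real.exp_log (by linarith)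
    have hconv := phiq_convexOn E w hp hq hw'
    have hdiff := phiq_diff E w (p := p) (q := q) hp hq
    have hb2 : ⟪g, y - z⟫ ≤ phiq E w p q y - phiq E w p q z :=
      convex_gradient_ineq hconv (hdiff z) y
    have hb1 : ⟪η, z - y⟫ ≤ phim E w p z - phim E w p y := hη z
    have hin : ⟪lam • (η - g), z - y⟫ = lam * (⟪η, z - y⟫ + ⟪g, y - z⟫) := by
      rw [real_inner_smul_left, inner_sub_left]
      have h0 : ⟪g, y - z⟫ = -⟪g, z - y⟫ := by
        rw [← inner_neg_right]
        congr 1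
        abel
      rw [h0]; ring
    have hfin : ‖z - y‖^2 = lam * (⟪η, z - y⟫ + ⟪g, y - z⟫) := by
      rw [← hin, ← hzy, real_inner_self_eq_norm_sq]
    -- ‖y‖ ≤ ‖x‖
    have hyx2 : ‖y‖ ≤ ‖x‖ := by
      have h6 := hη 0
      rw [hphim0] at h6
      have h8 : ⟪η, (0:EuclideanSpace ℝ (Fin N)) - y⟫ = -⟪η, y⟫ := by
        rw [zero_sub, inner_neg_right]
      have h7 : 0 ≤ ⟪η, y⟫ := by
        have := hphim_nonneg y
        linarith [h6, h8.symm.trans_le h6]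
      have h9 : ⟪x - y, y⟫ = lam * ⟪η, y⟫ := by rw [hxy, real_inner_smul_left]
      have h11 : 0 ≤ ⟪x - y, y⟫ := by rw [h9]; exact mul_nonneg hlam.le h7
      have h12 : ⟪x - y, y⟫ = ⟪x, y⟫ - ⟪y, y⟫ := inner_sub_left x y y
      have h13 : ⟪y, y⟫ = ‖y‖^2 := real_inner_self_eq_norm_sq y
      have h14 : ⟪x, y⟫ ≤ ‖x‖ * ‖y‖ := real_inner_le_norm x y
      nlinarith [norm_nonneg y, norm_nonneg x]
    have hphimy : phim E w p y ≤ κ * ‖x‖^p := by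
      refine le_trans (hκ y) ?_
      exact mul_le_mul_of_nonneg_left
        (Real.rpow_le_rpow (norm_nonneg y) hyx2 hp0.le) hκ0
    have hcomp1 : phim E w p z ≤ phiq E w p q z := phim_le_phiq E w hp0 hq.le hw' z
    have hcomp2 : phiq E w p q y ≤ c * phim E w p y := phiq_le_c_phim E w hp0 hq.le hw' y
    have hkey : ‖z - y‖^2 ≤ lam * (lam^(1+δ) * (κ * ‖x‖^p)) := by
      have e3 : (c-1) * phim E w p y = c * phim E w p y - phim E w p y := by ring
      have step1 : ‖z - y‖^2 ≤ lam * ((c-1) * phim E w p y) := by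
        rw [hfin]
        apply mul_le_mul_of_nonneg_left _ hlam.le
        linarith [hb1, hb2, hcomp1, hcomp2, e3]
      refine le_trans step1 (mul_le_mul_of_nonneg_left ?_ hlam.le)
      have h4 : (c-1) * phim E w p y ≤ (c-1) * (κ*‖x‖^p) :=
        mul_le_mul_of_nonneg_left hphimy (by linarith)
      have h5 : (c-1) * (κ*‖x‖^p) ≤ lam^(1+δ) * (κ*‖x‖^p) :=
        mul_le_mul_of_nonneg_right (by linarith) hkx
      linarith
    have hstep : (lam⁻¹)^2 * ‖z-y‖^2 ≤ (lam⁻¹)^2 * (lam * (lam^(1+δ) * (κ*‖x‖^p))) :=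
      mul_le_mul_of_nonneg_left hkey (by positivity)
    have heq2 : (lam⁻¹)^2 * (lam * (lam^(1+δ) * (κ*‖x‖^p))) = lam^δ * κ * ‖x‖^p := by
      rw [Real.rpow_add hlam, Real.rpow_one]
      field_simp
    linarith [hstep, heq2.symm.trans_le (le_refl _)]
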